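/- For every integer j ≥ 1 and every ε > 0 there exists a constant C > 0 such that the following holds. Let Z be a deck with multiplicities 𝐦 = (m_1,…,m_n) with j < m*, suppose at least εn of the types have multiplicity at least j+1, and suppose m ≥ ε·m*. Then for every 1 ≤ t ≤ N, setting λ = t^{j+1}·β_{j+1}/n^j, one has |λ − E[W_j(t)]| ≤ C·t^j/n^j. -/

import Mathlib

open Finset

/-- The set of decks (words) with `n` card types where type `i` appears exactly `m i` times. -/
def decks (n : ℕ) (m : Fin n → ℕ) : Finset (Fin (∑ i, m i) → Fin n) :=
  Finset.univ.filter fun w => ∀ i, (Finset.univ.filter fun s => w s = i).card = m i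

/-- Probability of an event under the uniformly random deck with multiplicities `m`. -/
noncomputable def pr (n : ℕ) (m : Fin n → ℕ)
    (E : (Fin (∑ i, m i) → Fin n) → Prop) : ℝ :=
  letI := Classical.decPred E
  (((decks n m).filter E).card : ℝ) / ((decks n m).card : ℝ)

/-- Expectation of a function of the uniformly random deck with multiplicities `m`. -/
noncomputable def expect (n : ℕ) (m : Fin n → ℕ)
    (f : (Fin (∑ i, m i) → Fin n) → ℝ) : ℝ :=
  (∑ w ∈ decks n m, f w) / ((decks n m).card : ℝ)

/-- `T j w` : the last time `t` such that no card type appears more than `j` times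
among the first `t` cards `w 0, …, w (t-1)`. -/
noncomputable def T {n N : ℕ} (j : ℕ) (w : Fin N → Fin n) : ℕ :=
  sSup {t | t ≤ N ∧ ∀ i : Fin n,
    (Finset.univ.filter fun s : Fin N => (s : ℕ) < t ∧ w s = i).card ≤ j}

/-- `W j t w` : the number of `(j+1)`-element sets of positions among the first `t`
positions on which `w` takes a common value. -/
def W {n N : ℕ} (j t : ℕ) (w : Fin N → Fin n) : ℕ :=
  ((Finset.univ.powersetCard (j + 1)).filter fun S : Finset (Fin N) =>
    (∀ s ∈ S, (s : ℕ) < t) ∧ ∃ i, ∀ s ∈ S, w s = i).card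

/-- `beta n m j = (1/n) ∑ᵢ C(mᵢ, j) / m^j` where `m = N/n` is the average multiplicity. -/
noncomputable def beta (n : ℕ) (m : Fin n → ℕ) (j : ℕ) : ℝ :=
  (1 / (n : ℝ)) * ∑ i, ((m i).choose j : ℝ) / (((∑ k, m k : ℕ) : ℝ) / (n : ℝ)) ^ j

/-- The number of correct guesses of the strategy `g` on the deck `w`, the cards being
revealed in order `w 0, w 1, …`; before the `t`-th card is revealed the guesser sees the
list of previously revealed cards. -/
def score {n N : ℕ} (g : List (Fin n) → Fin n) (w : Fin N → Fin n) : ℕ :=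
  (Finset.univ.filter fun t : Fin N => g ((List.ofFn w).take (t : ℕ)) = w t).card

/-- Expected number of correct guesses under the best strategy. -/
noncomputable def ESplus (n : ℕ) (m : Fin n → ℕ) : ℝ :=
  ⨆ g : List (Fin n) → Fin n, expect n m fun w => (score g w : ℝ)

/-- Expected number of correct guesses under the worst strategy. -/
noncomputable def ESminus (n : ℕ) (m : Fin n → ℕ) : ℝ :=
  ⨅ g : List (Fin n) → Fin n, expect n m fun w => (score g w : ℝ)

/-- Harmonic number `H k = 1 + 1/2 + ⋯ + 1/k`. -/
noncomputable def harm (k : ℕ) : ℝ := ∑ i ∈ Finset.range k, (1 : ℝ) / (i + 1)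

lemma decks_nonempty (n : ℕ) (m : Fin n → ℕ) : (decks n m).Nonempty := by
  have hcard : Fintype.card (Σ i, Fin (m i)) = Fintype.card (Fin (∑ i, m i)) := by
    simp [Fintype.card_sigma]
  let e : (Σ i, Fin (m i)) ≃ Fin (∑ i, m i) := Fintype.equivOfCardEq hcard
  refine ⟨fun s => (e.symm s).1, ?_⟩
  simp only [decks, mem_filter, mem_univ, true_and]
  intro i
  have h1 : (Finset.univ.filter fun s : Fin (∑ i, m i) => (e.symm s).1 = i).card
      = (Finset.univ.filter fun x : Σ i, Fin (m i) => x.1 = i).card := by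
    apply Finset.card_equiv e.symm
    intro s; simp
  rw [h1, Finset.card_filter]
  rw [← Finset.univ_sigma_univ, Finset.sum_sigma]
  simp [Finset.sum_ite_eq, apply_ite Finset.card]

lemma decks_comp_perm {n : ℕ} {m : Fin n → ℕ} (σ : Equiv.Perm (Fin (∑ i, m i)))
    {w : Fin (∑ i, m i) → Fin n} (hw : w ∈ decks n m) : w ∘ σ ∈ decks n m := by
  simp only [decks, mem_filter, mem_univ, true_and] at hw ⊢
  intro i
  rw [← hw i]
  apply Finset.card_equiv σ
  intro s; simp

lemma exists_perm_iff {N : ℕ} {S S' : Finset (Fin N)} (h : S.card = S'.card) :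
    ∃ σ : Equiv.Perm (Fin N), ∀ x, x ∈ S' ↔ σ x ∈ S := by
  classical
  have h1 : Fintype.card {x // x ∈ S'} = Fintype.card {x // x ∈ S} := by
    simp [Fintype.card_coe, h]
  have h2 : Fintype.card {x : Fin N // ¬ x ∈ S'} = Fintype.card {x : Fin N // ¬ x ∈ S} := by
    rw [Fintype.card_subtype_compl, Fintype.card_subtype_compl]
    simp [Fintype.card_coe, h]
  let e1 := Fintype.equivOfCardEq h1
  let e2 := Fintype.equivOfCardEq h2
  refine ⟨(Equiv.sumCompl (· ∈ S')).symm.trans ((e1.sumCongr e2).trans (Equiv.sumCompl (· ∈ S))), fun x => ?_⟩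
  by_cases hx : x ∈ S'
  · simp only [Equiv.trans_apply, Equiv.sumCompl_symm_apply_of_pos hx, Equiv.sumCongr_apply,
      Sum.map_inl, Equiv.sumCompl_apply_inl]
    exact ⟨fun _ => (e1 ⟨x, hx⟩).2, fun _ => hx⟩
  · simp only [Equiv.trans_apply, Equiv.sumCompl_symm_apply_of_neg hx, Equiv.sumCongr_apply,
      Sum.map_inr, Equiv.sumCompl_apply_inr]
    exact ⟨fun hc => absurd hc hx, fun hc => absurd hc (e2 ⟨x, hx⟩).2⟩

lemma count_const_eq {n : ℕ} {m : Fin n → ℕ} {S S' : Finset (Fin (∑ i, m i))}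
    (h : S.card = S'.card) (i : Fin n) :
    ((decks n m).filter fun w => ∀ s ∈ S, w s = i).card
      = ((decks n m).filter fun w => ∀ s ∈ S', w s = i).card := by
  classical
  obtain ⟨σ, hσ⟩ := exists_perm_iff h
  apply Finset.card_bij' (fun w _ => w ∘ σ) (fun w _ => w ∘ σ.symm)
  · intro w hw
    simp only [mem_filter] at hw ⊢
    refine ⟨decks_comp_perm σ hw.1, fun s hs => hw.2 (σ s) ((hσ s).1 hs)⟩
  · intro w hw
    simp only [mem_filter] at hw ⊢
    refine ⟨decks_comp_perm σ.symm hw.1, fun s hs => ?_⟩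
    have h1 : σ.symm s ∈ S' := (hσ (σ.symm s)).2 (by rwa [Equiv.apply_symm_apply])
    simpa using hw.2 _ h1
  · intro w _; ext s; simp
  · intro w _; ext s; simp

lemma card_filter_lt {N t : ℕ} (ht : t ≤ N) :
    (Finset.univ.filter fun s : Fin N => (s : ℕ) < t).card = t := by
  have : (Finset.univ.filter fun s : Fin N => (s : ℕ) < t)
      = Finset.map (Fin.castLEEmb ht) Finset.univ := by
    ext x
    simp only [mem_filter, mem_univ, true_and, Finset.mem_map, Fin.castLEEmb_apply]
    constructor
    · intro hx; exact ⟨⟨(x : ℕ), hx⟩, by ext; simp⟩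
    · rintro ⟨y, rfl⟩; exact y.2
  rw [this, Finset.card_map, Finset.card_univ, Fintype.card_fin]

lemma card_exists_split {n : ℕ} {m : Fin n → ℕ} {S : Finset (Fin (∑ i, m i))}
    (hS : S.Nonempty) :
    ((decks n m).filter fun w => ∃ i, ∀ s ∈ S, w s = i).card
      = ∑ i, ((decks n m).filter fun w => ∀ s ∈ S, w s = i).card := by
  classical
  obtain ⟨s0, hs0⟩ := hS
  rw [Finset.card_eq_sum_card_fiberwise
    (f := fun w => w s0) (t := Finset.univ) (fun w _ => mem_univ _)]
  refine Finset.sum_congr rfl fun i _ => ?_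
  congr 1
  rw [Finset.filter_filter]
  apply Finset.filter_congr
  intro w _
  constructor
  · rintro ⟨⟨i', hi'⟩, rfl⟩; exact fun s hs => by rw [hi' s hs, hi' s0 hs0]
  · intro hw; exact ⟨⟨i, hw⟩, hw s0 hs0⟩

lemma key_count {n : ℕ} (m : Fin n → ℕ) (j t : ℕ) (ht : t ≤ ∑ i, m i) :
    (∑ i, m i).choose (j + 1) * ∑ w ∈ decks n m, W j t w
      = t.choose (j + 1) * ((decks n m).card * ∑ i, (m i).choose (j + 1)) := by
  classical
  set N := ∑ i, m i with hN
  rcases lt_or_ge N (j + 1) with hNj | hNj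
  · rw [Nat.choose_eq_zero_of_lt hNj, Nat.choose_eq_zero_of_lt (lt_of_le_of_lt ht hNj)]
    simp
  -- choose a reference set S0 of size j+1
  obtain ⟨S0, -, hS0card⟩ := Finset.exists_subset_card_eq
    (show j + 1 ≤ (Finset.univ : Finset (Fin N)).card by simpa using hNj)
  set g : Finset (Fin N) → ℕ :=
    fun S => ∑ i, ((decks n m).filter fun w => ∀ s ∈ S, w s = i).card with hg
  have gconst : ∀ S ∈ (Finset.univ : Finset (Fin N)).powersetCard (j + 1), g S = g S0 := by
    intro S hS
    rw [Finset.mem_powersetCard] at hS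
    exact Finset.sum_congr rfl fun i _ => count_const_eq (by rw [hS.2, hS0card]) i
  -- Step A : ∑_w W = choose t (j+1) * g S0
  have stepA : ∑ w ∈ decks n m, W j t w = t.choose (j + 1) * g S0 := by
    have hW : ∀ w : Fin N → Fin n, W j t w =
        ((((Finset.univ : Finset (Fin N)).powersetCard (j + 1)).filter
            fun S : Finset (Fin N) => ∀ s ∈ S, (s : ℕ) < t).filter
          fun S => ∃ i, ∀ s ∈ S, w s = i).card := by
      intro w; rw [W, Finset.filter_filter]
    have swap : ∑ w ∈ decks n m, W j t w
        = ∑ S ∈ (((Finset.univ : Finset (Fin N)).powersetCard (j + 1)).filter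
            fun S : Finset (Fin N) => ∀ s ∈ S, (s : ℕ) < t),
            ((decks n m).filter fun w => ∃ i, ∀ s ∈ S, w s = i).card := by
      simp only [hW, Finset.card_filter]
      rw [Finset.sum_comm]
    rw [swap]
    have : ∀ S ∈ (((Finset.univ : Finset (Fin N)).powersetCard (j + 1)).filter
        fun S : Finset (Fin N) => ∀ s ∈ S, (s : ℕ) < t),
        ((decks n m).filter fun w => ∃ i, ∀ s ∈ S, w s = i).card = g S0 := by
      intro S hS
      rw [Finset.mem_filter] at hS
      have hcard : S.card = j + 1 := (Finset.mem_powersetCard.mp hS.1).2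
      have hpos : S.Nonempty := Finset.card_pos.mp (by rw [hcard]; exact Nat.succ_pos j)
      exact (card_exists_split hpos).trans (gconst S hS.1)
    rw [Finset.sum_congr rfl this, Finset.sum_const, smul_eq_mul]
    congr 1
    have : (((Finset.univ : Finset (Fin N)).powersetCard (j + 1)).filter
        fun S : Finset (Fin N) => ∀ s ∈ S, (s : ℕ) < t)
        = (Finset.univ.filter fun s : Fin N => (s : ℕ) < t).powersetCard (j + 1) := by
      ext S
      simp only [Finset.mem_filter, Finset.mem_powersetCard, Finset.subset_iff,
        mem_univ, true_and, Finset.mem_filter]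
      tauto
    rw [this, Finset.card_powersetCard, card_filter_lt ht]
  -- Step B : decks.card * ∑ choose = choose N (j+1) * g S0
  have stepB : (decks n m).card * ∑ i, (m i).choose (j + 1) = N.choose (j + 1) * g S0 := by
    have h1 : N.choose (j + 1) * g S0
        = ∑ S ∈ (Finset.univ : Finset (Fin N)).powersetCard (j + 1), g S := by
      rw [Finset.sum_congr rfl gconst, Finset.sum_const, smul_eq_mul,
        Finset.card_powersetCard, Finset.card_univ, Fintype.card_fin]
    rw [h1, hg, Finset.sum_comm]
    rw [Finset.mul_sum]
    refine Finset.sum_congr rfl fun i _ => Eq.symm ?_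
    have h2 : ∀ w ∈ decks n m,
        (((Finset.univ : Finset (Fin N)).powersetCard (j + 1)).filter
          fun S => ∀ s ∈ S, w s = i).card = (m i).choose (j + 1) := by
      intro w hw
      have : (((Finset.univ : Finset (Fin N)).powersetCard (j + 1)).filter
          fun S => ∀ s ∈ S, w s = i)
          = (Finset.univ.filter fun s : Fin N => w s = i).powersetCard (j + 1) := by
        ext S
        simp only [Finset.mem_filter, Finset.mem_powersetCard, Finset.subset_iff,
          mem_univ, true_and, Finset.mem_filter]
        tauto
      rw [this, Finset.card_powersetCard]
      simp only [decks, mem_filter, mem_univ, true_and] at hw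
      rw [hw i]
    calc ∑ S ∈ (Finset.univ : Finset (Fin N)).powersetCard (j + 1),
          ((decks n m).filter fun w => ∀ s ∈ S, w s = i).card
        = ∑ w ∈ decks n m,
            (((Finset.univ : Finset (Fin N)).powersetCard (j + 1)).filter
              fun S => ∀ s ∈ S, w s = i).card := by
          simp only [Finset.card_filter]
          rw [Finset.sum_comm]
      _ = ∑ _w ∈ decks n m, (m i).choose (j + 1) := Finset.sum_congr rfl h2
      _ = (decks n m).card * (m i).choose (j + 1) := by rw [Finset.sum_const, smul_eq_mul]
  rw [stepA, stepB]
  ring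

lemma prod_sub_prod_le (s : Finset ℕ) (a b : ℕ → ℝ) (M : ℝ) (hM : 0 ≤ M)
    (hb0 : ∀ i ∈ s, 0 ≤ b i) (hba : ∀ i ∈ s, b i ≤ a i) (haM : ∀ i ∈ s, a i ≤ M) :
    ∏ i ∈ s, a i - ∏ i ∈ s, b i ≤ (∑ i ∈ s, (a i - b i)) * M ^ (s.card - 1) := by
  classical
  induction s using Finset.induction_on with
  | empty => simp
  | insert x s hx ih =>
    have hb0' : ∀ i ∈ s, 0 ≤ b i := fun i hi => hb0 i (mem_insert_of_mem hi)
    have hba' : ∀ i ∈ s, b i ≤ a i := fun i hi => hba i (mem_insert_of_mem hi)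
    have haM' : ∀ i ∈ s, a i ≤ M := fun i hi => haM i (mem_insert_of_mem hi)
    have hax : a x ≤ M := haM x (mem_insert_self x s)
    have hbx : 0 ≤ b x := hb0 x (mem_insert_self x s)
    have hbax : b x ≤ a x := hba x (mem_insert_self x s)
    have IH := ih hb0' hba' haM'
    rw [Finset.prod_insert hx, Finset.prod_insert hx, Finset.sum_insert hx,
      Finset.card_insert_of_notMem hx]
    have hprodnn : 0 ≤ ∏ i ∈ s, b i := Finset.prod_nonneg hb0'
    have hprodle : ∏ i ∈ s, b i ≤ ∏ i ∈ s, a i :=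
      Finset.prod_le_prod hb0' hba'
    have hbM : ∏ i ∈ s, b i ≤ M ^ s.card := by
      calc ∏ i ∈ s, b i ≤ ∏ _i ∈ s, M :=
            Finset.prod_le_prod hb0' (fun i hi => le_trans (hba' i hi) (haM' i hi))
        _ = M ^ s.card := by rw [Finset.prod_const]
    have key : a x * ∏ i ∈ s, a i - b x * ∏ i ∈ s, b i
        = a x * (∏ i ∈ s, a i - ∏ i ∈ s, b i) + (a x - b x) * ∏ i ∈ s, b i := by ring
    rw [key]
    have h1 : a x * (∏ i ∈ s, a i - ∏ i ∈ s, b i)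
        ≤ M * ((∑ i ∈ s, (a i - b i)) * M ^ (s.card - 1)) := by
      calc a x * (∏ i ∈ s, a i - ∏ i ∈ s, b i)
          ≤ M * (∏ i ∈ s, a i - ∏ i ∈ s, b i) :=
            mul_le_mul_of_nonneg_right hax (by linarith)
        _ ≤ M * ((∑ i ∈ s, (a i - b i)) * M ^ (s.card - 1)) :=
            mul_le_mul_of_nonneg_left IH hM
    have h2 : (a x - b x) * ∏ i ∈ s, b i ≤ (a x - b x) * M ^ s.card :=
      mul_le_mul_of_nonneg_left hbM (by linarith)
    have h3 : M * ((∑ i ∈ s, (a i - b i)) * M ^ (s.card - 1))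
        = (∑ i ∈ s, (a i - b i)) * M ^ s.card := by
      rcases Nat.eq_zero_or_pos s.card with h | h
      · rw [Finset.card_eq_zero.mp h]; simp
      · have hc : s.card - 1 + 1 = s.card := Nat.succ_pred_eq_of_pos h
        calc M * ((∑ i ∈ s, (a i - b i)) * M ^ (s.card - 1))
            = (∑ i ∈ s, (a i - b i)) * (M ^ (s.card - 1) * M) := by ring
          _ = (∑ i ∈ s, (a i - b i)) * M ^ (s.card - 1 + 1) := by rw [pow_succ]
          _ = (∑ i ∈ s, (a i - b i)) * M ^ s.card := by rw [hc]
    rw [h3] at h1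
    have : (∑ i ∈ insert x s, (a i - b i)) = (a x - b x) + ∑ i ∈ s, (a i - b i) := by
      rw [Finset.sum_insert hx]
    calc a x * (∏ i ∈ s, a i - ∏ i ∈ s, b i) + (a x - b x) * ∏ i ∈ s, b i
        ≤ (∑ i ∈ s, (a i - b i)) * M ^ s.card + (a x - b x) * M ^ s.card := by linarith
      _ = ((a x - b x) + ∑ i ∈ s, (a i - b i)) * M ^ (s.card + 1 - 1) := by
          simp only [Nat.add_sub_cancel]; ring

lemma choose_ratio_eq (k t N : ℕ) (hN : k ≤ N) :
    (t.choose k : ℝ) / (N.choose k : ℝ)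
      = (t.descFactorial k : ℝ) / (N.descFactorial k : ℝ) := by
  have h1 : (t.descFactorial k : ℝ) = (k.factorial : ℝ) * (t.choose k : ℝ) := by
    rw [← Nat.cast_mul, ← Nat.descFactorial_eq_factorial_mul_choose]
  have h2 : (N.descFactorial k : ℝ) = (k.factorial : ℝ) * (N.choose k : ℝ) := by
    rw [← Nat.cast_mul, ← Nat.descFactorial_eq_factorial_mul_choose]
  rw [h1, h2, mul_div_mul_left]
  exact_mod_cast k.factorial_ne_zero

lemma ratio_bound (j t N : ℕ) (ht1 : 1 ≤ t) (htN : t ≤ N) (hN : j + 1 ≤ N) :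
    0 ≤ (t : ℝ) ^ (j + 1) / (N : ℝ) ^ (j + 1) - (t.choose (j + 1) : ℝ) / (N.choose (j + 1) : ℝ)
    ∧ (t : ℝ) ^ (j + 1) / (N : ℝ) ^ (j + 1) - (t.choose (j + 1) : ℝ) / (N.choose (j + 1) : ℝ)
      ≤ ((j : ℝ) * (j + 1) ^ 2) * (t : ℝ) ^ j / (N : ℝ) ^ (j + 1) := by
  have hN0 : (0 : ℝ) < N := by exact_mod_cast Nat.lt_of_lt_of_le (Nat.succ_pos 0) (le_trans ht1 htN)
  have ht0 : (0 : ℝ) < t := by exact_mod_cast ht1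
  have htN' : (t : ℝ) ≤ N := by exact_mod_cast htN
  rw [choose_ratio_eq (j + 1) t N hN]
  rcases lt_or_ge t (j + 1) with htj | htj
  · rw [Nat.descFactorial_eq_zero_iff_lt.mpr htj]
    constructor
    · simp; positivity
    · simp only [Nat.cast_zero, zero_div, sub_zero]
      have h1 : (t : ℝ) ^ (j + 1) = (t : ℝ) ^ j * t := by rw [pow_succ]
      have h2 : (t : ℝ) ≤ j := by exact_mod_cast Nat.lt_succ_iff.mp htj
      have hj0 : (0 : ℝ) ≤ (j : ℝ) := j.cast_nonneg
      have h4 : (t : ℝ) ≤ (j : ℝ) * ((j : ℝ) + 1) ^ 2 := by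
        nlinarith [mul_nonneg hj0 hj0, mul_nonneg (mul_nonneg hj0 hj0) hj0]
      have h3 : (t : ℝ) ^ (j + 1) ≤ ((j : ℝ) * ((j : ℝ) + 1) ^ 2) * (t : ℝ) ^ j := by
        calc (t : ℝ) ^ (j + 1) = (t : ℝ) ^ j * t := by rw [pow_succ]
          _ ≤ (t : ℝ) ^ j * ((j : ℝ) * ((j : ℝ) + 1) ^ 2) :=
              mul_le_mul_of_nonneg_left h4 (pow_nonneg ht0.le j)
          _ = ((j : ℝ) * ((j : ℝ) + 1) ^ 2) * (t : ℝ) ^ j := by ring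
      have h5 : (0 : ℝ) < (N : ℝ) ^ (j + 1) := by positivity
      calc (t : ℝ) ^ (j + 1) / (N : ℝ) ^ (j + 1)
          ≤ ((j : ℝ) * ((j : ℝ) + 1) ^ 2) * (t : ℝ) ^ j / (N : ℝ) ^ (j + 1) := by
            rw [div_le_div_iff₀ h5 h5]; nlinarith [h3, h5]
        _ = ((j : ℝ) * ((j : ℝ) + 1) ^ 2) * (t : ℝ) ^ j / (N : ℝ) ^ (j + 1) := rfl
  -- main case : j + 1 ≤ t
  set a : ℕ → ℝ := fun _ => (t : ℝ) / N with ha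
  set b : ℕ → ℝ := fun i => ((t : ℝ) - i) / ((N : ℝ) - i) with hb
  have hibd : ∀ i ∈ Finset.range (j + 1), (i : ℝ) ≤ j ∧ (0 : ℝ) < (N : ℝ) - i ∧ (0 : ℝ) ≤ (t : ℝ) - i := by
    intro i hi
    rw [Finset.mem_range] at hi
    have h1 : (i : ℝ) ≤ j := by exact_mod_cast Nat.lt_succ_iff.mp hi
    have h2 : (i : ℝ) < t := by
      have : i < t := lt_of_lt_of_le hi htj
      exact_mod_cast this
    exact ⟨h1, by linarith, by linarith⟩
  have hb0 : ∀ i ∈ Finset.range (j + 1), 0 ≤ b i := by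
    intro i hi
    obtain ⟨_, h2, h3⟩ := hibd i hi
    exact div_nonneg h3 h2.le
  have hba : ∀ i ∈ Finset.range (j + 1), b i ≤ a i := by
    intro i hi
    obtain ⟨_, h2, h3⟩ := hibd i hi
    rw [ha, hb, div_le_div_iff₀ h2 hN0]
    have : (0 : ℝ) ≤ i := i.cast_nonneg
    nlinarith
  have haM : ∀ i ∈ Finset.range (j + 1), a i ≤ (t : ℝ) / N := fun i _ => le_refl _
  have ha_prod : ∏ i ∈ Finset.range (j + 1), a i = (t : ℝ) ^ (j + 1) / (N : ℝ) ^ (j + 1) := by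
    rw [ha, Finset.prod_const, Finset.card_range, div_pow]
  have hb_prod : ∏ i ∈ Finset.range (j + 1), b i
      = (t.descFactorial (j + 1) : ℝ) / (N.descFactorial (j + 1) : ℝ) := by
    have hcast : ∀ (M : ℕ), j + 1 ≤ M → (M.descFactorial (j + 1) : ℝ)
        = ∏ i ∈ Finset.range (j + 1), ((M : ℝ) - i) := by
      intro M hM
      rw [Nat.descFactorial_eq_prod_range, Nat.cast_prod]
      refine Finset.prod_congr rfl fun i hi => ?_
      rw [Finset.mem_range] at hi
      exact Nat.cast_sub (by omega)
    rw [hcast t htj, hcast N hN, hb, Finset.prod_div_distrib]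
  have key := prod_sub_prod_le (Finset.range (j + 1)) a b ((t : ℝ) / N)
    (by positivity) hb0 hba haM
  rw [ha_prod, hb_prod, Finset.card_range, Nat.add_sub_cancel] at key
  constructor
  · rw [← ha_prod, ← hb_prod, sub_nonneg]
    exact Finset.prod_le_prod hb0 hba
  · refine le_trans key ?_
    have hsum : ∑ i ∈ Finset.range (j + 1), (a i - b i)
        ≤ (j + 1 : ℝ) * ((j : ℝ) * (j + 1) / N) := by
      calc ∑ i ∈ Finset.range (j + 1), (a i - b i)
          ≤ ∑ _i ∈ Finset.range (j + 1), ((j : ℝ) * (j + 1) / N) := by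
            refine Finset.sum_le_sum fun i hi => ?_
            obtain ⟨h1, h2, h3⟩ := hibd i hi
            rw [ha, hb, div_sub_div _ _ hN0.ne' h2.ne', div_le_div_iff₀ (by positivity) hN0]
            have hNj : (j : ℝ) + 1 ≤ N := by exact_mod_cast hN
            have hi0 : (0 : ℝ) ≤ i := i.cast_nonneg
            have e1 : (i : ℝ) * ((N : ℝ) - t) ≤ (j : ℝ) * ((N : ℝ) - i) :=
              mul_le_mul h1 (by linarith) (by linarith) (j.cast_nonneg)
            nlinarith [mul_le_mul_of_nonneg_right e1 hN0.le,
              mul_nonneg (mul_nonneg (mul_nonneg (Nat.cast_nonneg j) (Nat.cast_nonneg j)) hN0.le) h2.le]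
        _ = (j + 1 : ℝ) * ((j : ℝ) * (j + 1) / N) := by
            rw [Finset.sum_const, Finset.card_range]; push_cast; ring
    have hMj : (0 : ℝ) ≤ ((t : ℝ) / N) ^ j := by positivity
    calc (∑ i ∈ Finset.range (j + 1), (a i - b i)) * ((t : ℝ) / N) ^ j
        ≤ ((j + 1 : ℝ) * ((j : ℝ) * (j + 1) / N)) * ((t : ℝ) / N) ^ j :=
          mul_le_mul_of_nonneg_right hsum hMj
      _ = ((j : ℝ) * (j + 1) ^ 2) * (t : ℝ) ^ j / (N : ℝ) ^ (j + 1) := by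
          rw [div_pow, pow_succ]
          field_simp
          ring

lemma expect_W (n : ℕ) (m : Fin n → ℕ) (j t : ℕ) (ht : t ≤ ∑ i, m i)
    (hN : j + 1 ≤ ∑ i, m i) :
    expect n m (fun w => (W j t w : ℝ))
      = (t.choose (j + 1) : ℝ) * (∑ i, ((m i).choose (j + 1) : ℝ))
          / ((∑ i, m i).choose (j + 1) : ℝ) := by
  have hD : (0 : ℝ) < ((decks n m).card : ℝ) := by
    exact_mod_cast Finset.card_pos.mpr (decks_nonempty n m)
  have hC : (0 : ℝ) < (((∑ i, m i).choose (j + 1) : ℕ) : ℝ) := by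
    exact_mod_cast Nat.choose_pos hN
  have keyR : (((∑ i, m i).choose (j + 1) : ℕ) : ℝ) * ∑ w ∈ decks n m, (W j t w : ℝ)
      = (t.choose (j + 1) : ℝ) * (((decks n m).card : ℝ) * ∑ i, ((m i).choose (j + 1) : ℝ)) := by
    exact_mod_cast congrArg (Nat.cast (R := ℝ)) (key_count m j t ht)
  rw [_root_.expect]
  rw [div_eq_div_iff hD.ne' hC.ne']
  linear_combination keyR

/-- Lemma: `|λ − E[W_j(t)]| = O(t^j/n^j)`.
For every `j ≥ 1` and `ε > 0` there is `C > 0` such that for every deck with `j < m*`,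
at least `εn` types of multiplicity at least `j+1`, and `m ≥ ε m*`: for all `1 ≤ t ≤ N`,
with `λ = t^{j+1} β_{j+1}/n^j`, one has `|λ − E[W_j(t)]| ≤ C t^j/n^j`. -/
theorem lambda_expectation_close (j : ℕ) (hj : 1 ≤ j) (ε : ℝ) (hε : 0 < ε) :
    ∃ C : ℝ, 0 < C ∧
      ∀ (n : ℕ) (m : Fin n → ℕ),
        j < Finset.univ.sup m →
        ε * (n : ℝ) ≤ ((Finset.univ.filter fun i : Fin n => j + 1 ≤ m i).card : ℝ) →
        ε * ((Finset.univ.sup m : ℕ) : ℝ) ≤ ((∑ i, m i : ℕ) : ℝ) / n →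
        ∀ t : ℕ, 1 ≤ t → t ≤ ∑ i, m i →
          |(t : ℝ) ^ (j + 1) * beta n m (j + 1) / (n : ℝ) ^ j -
              expect n m (fun w => (W j t w : ℝ))| ≤
            C * (t : ℝ) ^ j / (n : ℝ) ^ j := by
  have hjR : (0 : ℝ) < (j : ℝ) := by exact_mod_cast hj
  refine ⟨(j : ℝ) * ((j : ℝ) + 1) ^ 2 / ε ^ (j + 1), by positivity, ?_⟩
  intro n m h1 h2 h3 t ht1 htN
  rcases Nat.eq_zero_or_pos n with rfl | hn
  · simp [Finset.univ_eq_empty] at h1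
  haveI : Nonempty (Fin n) := Fin.pos_iff_nonempty.mp hn
  have hnR : (0 : ℝ) < (n : ℝ) := by exact_mod_cast hn
  obtain ⟨i0, -, hi0⟩ := Finset.exists_mem_eq_sup (Finset.univ : Finset (Fin n))
    Finset.univ_nonempty m
  have hsupN : Finset.univ.sup m ≤ ∑ i, m i := by
    rw [hi0]
    exact Finset.single_le_sum (fun i _ => Nat.zero_le _) (mem_univ i0)
  have hN : j + 1 ≤ ∑ i, m i := le_trans h1 hsupN
  have hNR : (0 : ℝ) < ((∑ i, m i : ℕ) : ℝ) := by
    have : 0 < ∑ i, m i := lt_of_lt_of_le (Nat.succ_pos j) hN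
    exact_mod_cast this
  -- rewrite λ
  have hlam : (t : ℝ) ^ (j + 1) * beta n m (j + 1) / (n : ℝ) ^ j
      = (∑ i, ((m i).choose (j + 1) : ℝ))
          * ((t : ℝ) ^ (j + 1) / ((∑ i, m i : ℕ) : ℝ) ^ (j + 1)) := by
    have hs : (∑ x : Fin n, ((m x : ℕ) : ℝ)) ≠ 0 := by
      rw [← Nat.cast_sum]; exact hNR.ne'
    rw [beta, ← Finset.sum_div, div_pow]
    push_cast
    field_simp
    ring
  rw [hlam, expect_W n m j t htN hN]
  set A : ℝ := ∑ i, ((m i).choose (j + 1) : ℝ) with hA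
  have hA0 : 0 ≤ A := Finset.sum_nonneg fun i _ => Nat.cast_nonneg _
  set X : ℝ := (t : ℝ) ^ (j + 1) / ((∑ i, m i : ℕ) : ℝ) ^ (j + 1) with hX
  set Y : ℝ := (t.choose (j + 1) : ℝ) / (((∑ i, m i).choose (j + 1) : ℕ) : ℝ) with hY
  have hrw : (t.choose (j + 1) : ℝ) * A / (((∑ i, m i).choose (j + 1) : ℕ) : ℝ) = A * Y := by
    rw [hY]; ring
  rw [hrw]
  obtain ⟨hXY0, hXYb⟩ := ratio_bound j t (∑ i, m i) ht1 htN hN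
  rw [← hX, ← hY] at hXY0 hXYb
  have habs : |A * X - A * Y| = A * (X - Y) := by
    rw [← mul_sub, abs_of_nonneg (mul_nonneg hA0 hXY0)]
  rw [habs]
  -- bound A
  have hsup : ((Finset.univ.sup m : ℕ) : ℝ)
      ≤ ((∑ i, m i : ℕ) : ℝ) / ((n : ℝ) * ε) := by
    rw [le_div_iff₀ (by positivity)]
    calc ((Finset.univ.sup m : ℕ) : ℝ) * ((n : ℝ) * ε)
        = (ε * ((Finset.univ.sup m : ℕ) : ℝ)) * n := by ring
      _ ≤ (((∑ i, m i : ℕ) : ℝ) / n) * n := by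
          exact mul_le_mul_of_nonneg_right h3 hnR.le
      _ = ((∑ i, m i : ℕ) : ℝ) := by field_simp
  have hAb : A ≤ (n : ℝ) * (((∑ i, m i : ℕ) : ℝ) / ((n : ℝ) * ε)) ^ (j + 1) := by
    have h4 : A ≤ (n : ℝ) * (((Finset.univ.sup m : ℕ) : ℝ)) ^ (j + 1) := by
      rw [hA]
      calc ∑ i, ((m i).choose (j + 1) : ℝ)
          ≤ ∑ _i : Fin n, (((Finset.univ.sup m : ℕ) : ℝ)) ^ (j + 1) := by
            refine Finset.sum_le_sum fun i _ => ?_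
            have : (m i).choose (j + 1) ≤ (Finset.univ.sup m) ^ (j + 1) :=
              le_trans (Nat.choose_le_pow _ _)
                (Nat.pow_le_pow_left (Finset.le_sup (mem_univ i)) _)
            exact_mod_cast this
        _ = (n : ℝ) * (((Finset.univ.sup m : ℕ) : ℝ)) ^ (j + 1) := by
            rw [Finset.sum_const, Finset.card_univ, Fintype.card_fin, nsmul_eq_mul]
    refine le_trans h4 (mul_le_mul_of_nonneg_left ?_ hnR.le)
    exact pow_le_pow_left₀ (Nat.cast_nonneg _) hsup _
  calc A * (X - Y)
      ≤ ((n : ℝ) * (((∑ i, m i : ℕ) : ℝ) / ((n : ℝ) * ε)) ^ (j + 1))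
          * (((j : ℝ) * ((j : ℝ) + 1) ^ 2) * (t : ℝ) ^ j / ((∑ i, m i : ℕ) : ℝ) ^ (j + 1)) :=
        mul_le_mul hAb hXYb hXY0 (by positivity)
    _ = (j : ℝ) * ((j : ℝ) + 1) ^ 2 / ε ^ (j + 1) * (t : ℝ) ^ j / (n : ℝ) ^ j := by
        have hs : (∑ x : Fin n, ((m x : ℕ) : ℝ)) ≠ 0 := by
          rw [← Nat.cast_sum]; exact hNR.ne'
        rw [div_pow]
        push_cast
        field_simp
        ring
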